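/- Let L be a first-order language all of whose symbols are function symbols of arity ≥ 1, and let 𝔄 be an L-structure with underlying set A. The following are equivalent: (1) 𝔄 is a Ramsey algebra; (2) for every a : ℕ → A the induced orderly L-algebra 𝔄_a is a Ramsey orderly L-algebra; (3) for every a : ℕ → A the induced orderly L-algebra 𝔄_a is a weakly Ramsey orderly L-algebra. -/

import Mathlib

open Function Set

universe u v w

/-- Terms of a purely functional first-order language whose function symbols
of arity `n` form the type `F n`, with variables indexed by `ℕ`. -/
inductive Tm (F : ℕ → Type u) : Type u
  | var : ℕ → Tm F
  | func : {n : ℕ} → F n → (Fin n → Tm F) → Tm F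

namespace Tm

variable {F : ℕ → Type u} {A : Type v} {β : Type w}

/-- The list of (indices of) variables occurring in a term, from left to right. -/
def varList : Tm F → List ℕ
  | .var i => [i]
  | .func (n := n) _ ts => (List.finRange n).flatMap fun i => (ts i).varList

/-- A term is *orderly* if the indices of the variables occurring in it,
read from left to right, are strictly increasing. -/
def Orderly (t : Tm F) : Prop := t.varList.Chain' (· < ·)

/-- `TermLT s t` iff the index of the last variable of `s` is less than the
index of the first variable of `t`. -/
def TermLT (s t : Tm F) : Prop :=
  ∃ i j, s.varList.getLast? = some i ∧ t.varList.head? = some j ∧ i < j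

/-- An infinite sequence of orderly terms is *admissible* iff it is increasing
with respect to `TermLT`. -/
def Admissible (ts : ℕ → Tm F) : Prop :=
  (∀ i, (ts i).Orderly) ∧ ∀ i, TermLT (ts i) (ts (i + 1))

/-- `s.subst σ` replaces each variable `vᵢ` in `s` by `σ i`. -/
def subst (σ : ℕ → Tm F) : Tm F → Tm F
  | .var i => σ i
  | .func f ts => .func f fun i => (ts i).subst σ

/-- Interpretation of a term in a structure with underlying set `A` whose
interpretation of the function symbols is `I`, under the assignment `a`. -/
def realize (I : ∀ n, F n → (Fin n → A) → A) (a : ℕ → A) : Tm F → A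
  | .var i => a i
  | .func (n := n) f ts => I n f fun i => (ts i).realize I a

end Tm

section General

variable {F : ℕ → Type u} {A : Type v} {β : Type w}

/-- `b` is a reduction of `a` (with respect to the algebra `(A, I)`). -/
def SeqReduction (I : ∀ n, F n → (Fin n → A) → A) (b a : ℕ → A) : Prop :=
  ∃ ts : ℕ → Tm F, Tm.Admissible ts ∧ ∀ i, b i = (ts i).realize I a

/-- The set of finite reductions of `a`. -/
def FR (I : ∀ n, F n → (Fin n → A) → A) (a : ℕ → A) : Set A :=
  { x | ∃ t : Tm F, t.Orderly ∧ x = t.realize I a }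

/-- `(A, I)` is a Ramsey algebra. -/
def RamseyAlg (I : ∀ n, F n → (Fin n → A) → A) : Prop :=
  ∀ (a : ℕ → A) (X : Set A),
    ∃ b, SeqReduction I b a ∧ (FR I b ⊆ X ∨ FR I b ∩ X = ∅)

/-- `(A, I)` is Ramsey below `a`. -/
def RamseyBelow (I : ∀ n, F n → (Fin n → A) → A) (a : ℕ → A) : Prop :=
  ∀ b, SeqReduction I b a → ∀ X : Set A,
    ∃ c, SeqReduction I c b ∧ (FR I c ⊆ X ∨ FR I c ∩ X = ∅)

/-- An increasing tuple `t₁ < t₂ < ⋯ < tₙ` of orderly terms. -/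
def OrdTuple {n : ℕ} (t : Fin n → Tm F) : Prop :=
  (∀ i, (t i).Orderly) ∧ ∀ i j : Fin n, i < j → Tm.TermLT (t i) (t j)

/-- `𝒜` (as a function on orderly terms) is an orderly algebra. -/
def IsOrderlyAlg (𝒜 : Tm F → β) : Prop :=
  ∀ (n : ℕ) (f : F n) (t t' : Fin n → Tm F), OrdTuple t → OrdTuple t' →
    (∀ k, 𝒜 (t k) = 𝒜 (t' k)) → 𝒜 (.func f t) = 𝒜 (.func f t')

/-- The universe of an orderly algebra: its range on orderly terms. -/
def OAUniv (𝒜 : Tm F → β) : Set β := 𝒜 '' { t | t.Orderly }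

/-- `ℬ` is a reduction of the orderly algebra `𝒜` (as functions on orderly terms). -/
def OAReduction (ℬ 𝒜 : Tm F → β) : Prop :=
  ∃ ts : ℕ → Tm F, Tm.Admissible ts ∧ ∀ s : Tm F, s.Orderly → ℬ s = 𝒜 (s.subst ts)

/-- `ℬ` is homogeneous for `X`. -/
def Homog (ℬ : Tm F → β) (X : Set β) : Prop :=
  OAUniv ℬ ⊆ X ∨ OAUniv ℬ ∩ X = ∅

/-- An orderly algebra is weakly Ramsey. -/
def WeaklyRamseyOA (𝒜 : Tm F → β) : Prop :=
  ∀ X ⊆ OAUniv 𝒜, ∃ ℬ, OAReduction ℬ 𝒜 ∧ Homog ℬ X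

/-- An orderly algebra is Ramsey. -/
def RamseyOA (𝒜 : Tm F → β) : Prop :=
  ∀ ℬ, OAReduction ℬ 𝒜 → ∀ X ⊆ OAUniv 𝒜, ∃ 𝒞, OAReduction 𝒞 ℬ ∧ Homog 𝒞 X

/-- The orderly algebra induced from the algebra `(A, I)` by the sequence `a`. -/
def inducedOA (I : ∀ n, F n → (Fin n → A) → A) (a : ℕ → A) : Tm F → A :=
  fun t => t.realize I a

/-- `[FR(c)]ⁿ_<` : increasing `n`-tuples of finite reductions of `c`. -/
def FRtuple (I : ∀ n, F n → (Fin n → A) → A) (n : ℕ) (c : ℕ → A) : Set (Fin n → A) :=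
  { x | ∃ t : Fin n → Tm F, OrdTuple t ∧ ∀ i, x i = (t i).realize I c }

/-- `‖𝒞‖ⁿ_<` for an orderly algebra `𝒞`. -/
def OATuple (n : ℕ) (𝒞 : Tm F → β) : Set (Fin n → β) :=
  { x | ∃ t : Fin n → Tm F, OrdTuple t ∧ ∀ i, x i = 𝒞 (t i) }

/-- The basic set `[n, a]` of the preorder with approximations `(ᵂA, ≤)`. -/
def Approx (I : ∀ n, F n → (Fin n → A) → A) (n : ℕ) (a : ℕ → A) : Set (ℕ → A) :=
  { b | SeqReduction I b a ∧ ∀ i < n, b i = a i }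

/-- The natural topology on `ᵂA`, generated by the sets `[n, a]`. -/
def natTop (I : ∀ n, F n → (Fin n → A) → A) : TopologicalSpace (ℕ → A) :=
  TopologicalSpace.generateFrom { S | ∃ n a, S = Approx I n a }

/-- A subset `X ⊆ ᵂA` is Ramsey. -/
def RamseySet (I : ∀ n, F n → (Fin n → A) → A) (X : Set (ℕ → A)) : Prop :=
  ∀ (n : ℕ) (a : ℕ → A), ∃ b ∈ Approx I n a,
    Approx I n b ⊆ X ∨ Approx I n b ∩ X = ∅

/-- `X` has the property of Baire in the natural topology:
its symmetric difference with some open set is meager. -/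
def HasBaireProperty (I : ∀ n, F n → (Fin n → A) → A) (X : Set (ℕ → A)) : Prop :=
  ∃ U : Set (ℕ → A), @IsOpen _ (natTop I) U ∧ @IsMeagre _ (natTop I) (symmDiff X U)

end General

/-- The language with a single binary function symbol. -/
inductive BinF : ℕ → Type
  | f : BinF 2

/-- Application of the binary function symbol: the term `f s t`. -/
def fapp (s t : Tm BinF) : Tm BinF := .func BinF.f ![s, t]

/-- The interpretation of the single binary function symbol by a binary
operation `g` on `A`. -/
def binI {A : Type v} (g : A → A → A) : ∀ n, BinF n → (Fin n → A) → A
  | _, BinF.f, args => g (args 0) (args 1)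

/-- The pair `(tˣ, tʸ)`: `(vᵢˣ, vᵢʸ) = (v_{2i}, v_{2i+1})` and
`((f s t)ˣ, (f s t)ʸ) = (f sˣ sʸ, f tˣ tʸ)`. -/
def xyPair : Tm BinF → Tm BinF × Tm BinF
  | .var i => (.var (2 * i), .var (2 * i + 1))
  | .func BinF.f ts =>
      (fapp (xyPair (ts 0)).1 (xyPair (ts 0)).2, fapp (xyPair (ts 1)).1 (xyPair (ts 1)).2)

/-- The orderly algebra `♯𝒜`, `♯𝒜(t) = (𝒜(tˣ), 𝒜(tʸ))`. -/
def sharpOA {β : Type w} (𝒜 : Tm BinF → β) : Tm BinF → β × β :=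
  fun t => (𝒜 (xyPair t).1, 𝒜 (xyPair t).2)

/-!
Reducing the induced algebra `𝔄_a` along an admissible sequence `t⃗` yields, on orderly terms,
the induced algebra `𝔄_b` of the reduced sequence `b i = tᵢ[a]`, since evaluating `s[t⃗]` at `a`
is evaluating `s` at `b`. Hence the reductions of `𝔄_a` are exactly the `𝔄_b` with `b ≤ a`, and
`‖𝔄_b‖ = FR(b)`: all three conditions say that every sequence has a reduction whose finite
reductions are homogeneous. Intersecting `X` with the universe is harmless, because the universe
of a reduction lies inside the universe of the algebra it reduces.
-/

namespace List

variable {α : Type*} [Preorder α] {l : List α}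

theorem le_of_mem_of_getLast?_eq (hl : l.Pairwise (· < ·)) {x i : α} (hx : x ∈ l)
    (hi : l.getLast? = some i) : x ≤ i := by
  obtain ⟨ys, rfl⟩ := getLast?_eq_some_iff.mp hi
  rcases mem_append.mp hx with hx | hx
  · exact ((pairwise_append.mp hl).2.2 x hx i (mem_singleton_self i)).le
  · exact (mem_singleton.mp hx).le

theorem le_of_mem_of_head?_eq (hl : l.Pairwise (· < ·)) {y j : α} (hy : y ∈ l)
    (hj : l.head? = some j) : j ≤ y := by
  obtain ⟨ys, rfl⟩ := head?_eq_some_iff.mp hj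
  rcases mem_cons.mp hy with rfl | hy
  · exact le_rfl
  · exact ((pairwise_cons.mp hl).1 y hy).le

end List

namespace Tm

variable {F : ℕ → Type u} {A : Type v}

theorem orderly_iff_pairwise {t : Tm F} : t.Orderly ↔ t.varList.Pairwise (· < ·) :=
  List.isChain_iff_pairwise

theorem realize_subst (I : ∀ n, F n → (Fin n → A) → A) (a : ℕ → A) (σ : ℕ → Tm F) :
    ∀ s : Tm F, (s.subst σ).realize I a = s.realize I fun i => (σ i).realize I a
  | .var _ => rfl
  | .func f ts => congrArg (I _ f) (funext fun i => realize_subst I a σ (ts i))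

theorem varList_subst (σ : ℕ → Tm F) :
    ∀ s : Tm F, (s.subst σ).varList = s.varList.flatMap fun i => (σ i).varList
  | .var i => by simp [subst, varList]
  | .func f ts => by
      simp only [subst, varList, List.flatMap_assoc]
      exact congrArg (List.flatMap · _) (funext fun i => varList_subst σ (ts i))

theorem subst_var : ∀ s : Tm F, s.subst var = s
  | .var _ => rfl
  | .func f ts => congrArg (func f) (funext fun i => subst_var (ts i))

theorem TermLT.lt_of_mem {s t : Tm F} (h : TermLT s t) (hs : s.Orderly) (ht : t.Orderly)
    {x y : ℕ} (hx : x ∈ s.varList) (hy : y ∈ t.varList) : x < y := by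
  obtain ⟨i, j, hi, hj, hij⟩ := h
  calc x ≤ i := List.le_of_mem_of_getLast?_eq (orderly_iff_pairwise.mp hs) hx hi
    _ < j := hij
    _ ≤ y := List.le_of_mem_of_head?_eq (orderly_iff_pairwise.mp ht) hy hj

theorem Admissible.lt_of_mem {ts : ℕ → Tm F} (h : Admissible ts) {i j : ℕ} (hij : i < j)
    {x y : ℕ} (hx : x ∈ (ts i).varList) (hy : y ∈ (ts j).varList) : x < y := by
  induction j, hij using Nat.le_induction generalizing y with
  | base => exact (h.2 i).lt_of_mem (h.1 _) (h.1 _) hx hy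
  | succ j _ ih =>
    obtain ⟨z, _, hz, _, _⟩ := h.2 j
    have hz : z ∈ (ts j).varList := List.mem_of_getLast? hz
    exact (ih hz).trans ((h.2 j).lt_of_mem (h.1 _) (h.1 _) hz hy)

theorem Admissible.orderly_subst {ts : ℕ → Tm F} (h : Admissible ts) {s : Tm F}
    (hs : s.Orderly) : (s.subst ts).Orderly := by
  rw [orderly_iff_pairwise, varList_subst, List.pairwise_flatMap]
  exact ⟨fun i _ => orderly_iff_pairwise.mp (h.1 i),
    (orderly_iff_pairwise.mp hs).imp fun hij _ hx _ hy => h.lt_of_mem hij hx hy⟩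

theorem admissible_var : Admissible (F := F) var :=
  ⟨fun _ => List.isChain_singleton _, fun i => ⟨i, i + 1, rfl, rfl, i.lt_succ_self⟩⟩

end Tm

section OrderlyAlgebra

variable {F : ℕ → Type u} {β : Type w}

theorem oaUniv_congr {ℬ 𝒞 : Tm F → β} (h : EqOn ℬ 𝒞 {t | t.Orderly}) :
    OAUniv ℬ = OAUniv 𝒞 :=
  image_congr h

theorem OAReduction.refl (𝒜 : Tm F → β) : OAReduction 𝒜 𝒜 :=
  ⟨Tm.var, Tm.admissible_var, fun s _ => by rw [Tm.subst_var]⟩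

theorem OAReduction.oaUniv_subset {ℬ 𝒜 : Tm F → β} (h : OAReduction ℬ 𝒜) :
    OAUniv ℬ ⊆ OAUniv 𝒜 := by
  obtain ⟨ts, hts, hℬ⟩ := h
  rintro _ ⟨s, hs, rfl⟩
  exact ⟨s.subst ts, hts.orderly_subst hs, (hℬ s hs).symm⟩

theorem OAReduction.of_eqOn_right {𝒞 𝒜 𝒜' : Tm F → β} (h : OAReduction 𝒞 𝒜)
    (h𝒜 : EqOn 𝒜 𝒜' {t | t.Orderly}) : OAReduction 𝒞 𝒜' := by
  obtain ⟨ts, hts, h𝒞⟩ := h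
  exact ⟨ts, hts, fun s hs => (h𝒞 s hs).trans (h𝒜 (hts.orderly_subst hs))⟩

theorem Homog.of_inter {ℬ : Tm F → β} {X Y : Set β} (h : Homog ℬ (X ∩ Y))
    (hY : OAUniv ℬ ⊆ Y) : Homog ℬ X := by
  rcases h with h | h
  · exact .inl (h.trans inter_subset_left)
  · refine .inr (eq_empty_of_forall_notMem fun x ⟨hxℬ, hxX⟩ => ?_)
    exact h.subset ⟨hxℬ, hxX, hY hxℬ⟩

theorem RamseyOA.weaklyRamseyOA {𝒜 : Tm F → β} (h : RamseyOA 𝒜) : WeaklyRamseyOA 𝒜 :=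
  h 𝒜 (.refl 𝒜)

end OrderlyAlgebra

section InducedAlgebra

variable {F : ℕ → Type u} {A : Type v} (I : ∀ n, F n → (Fin n → A) → A)

theorem FR_eq_oaUniv_inducedOA (b : ℕ → A) : FR I b = OAUniv (inducedOA I b) := by
  ext x
  exact ⟨fun ⟨t, ht, hx⟩ => ⟨t, ht, hx.symm⟩, fun ⟨t, ht, hx⟩ => ⟨t, ht, hx.symm⟩⟩

theorem oaReduction_inducedOA_iff {ℬ : Tm F → A} {a : ℕ → A} :
    OAReduction ℬ (inducedOA I a) ↔
      ∃ b, SeqReduction I b a ∧ EqOn ℬ (inducedOA I b) {t | t.Orderly} := by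
  constructor
  · rintro ⟨ts, hts, hℬ⟩
    exact ⟨_, ⟨ts, hts, fun _ => rfl⟩, fun s hs => (hℬ s hs).trans (Tm.realize_subst I a ts s)⟩
  · rintro ⟨b, ⟨ts, hts, hb⟩, hℬ⟩
    obtain rfl : b = fun i => (ts i).realize I a := funext hb
    exact ⟨ts, hts, fun s hs => (hℬ hs).trans (Tm.realize_subst I a ts s).symm⟩

theorem ramseyAlg_iff_forall_weaklyRamseyOA :
    RamseyAlg I ↔ ∀ a, WeaklyRamseyOA (inducedOA I a) := by
  constructor
  · intro h a X _
    obtain ⟨b, hb, hhom⟩ := h a X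
    refine ⟨inducedOA I b, (oaReduction_inducedOA_iff I).mpr ⟨b, hb, eqOn_refl _ _⟩, ?_⟩
    rwa [Homog, ← FR_eq_oaUniv_inducedOA]
  · intro h a X
    obtain ⟨ℬ, hℬ, hhom⟩ := h a (X ∩ OAUniv (inducedOA I a)) inter_subset_right
    obtain ⟨b, hb, hℬb⟩ := (oaReduction_inducedOA_iff I).mp hℬ
    refine ⟨b, hb, ?_⟩
    rw [FR_eq_oaUniv_inducedOA, ← oaUniv_congr hℬb]
    exact hhom.of_inter hℬ.oaUniv_subset

theorem ramseyOA_inducedOA_of_forall_weaklyRamseyOA (h : ∀ a, WeaklyRamseyOA (inducedOA I a))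
    (a : ℕ → A) : RamseyOA (inducedOA I a) := by
  intro ℬ hℬ X _
  obtain ⟨b, _, hℬb⟩ := (oaReduction_inducedOA_iff I).mp hℬ
  obtain ⟨𝒞, h𝒞, hhom⟩ := h b (X ∩ OAUniv (inducedOA I b)) inter_subset_right
  exact ⟨𝒞, h𝒞.of_eqOn_right hℬb.symm, hhom.of_inter h𝒞.oaUniv_subset⟩

end InducedAlgebra

theorem ramsey_algebra_tfae_general {F : ℕ → Type u} {A : Type v}
    (I : ∀ n, F n → (Fin n → A) → A) :
    (RamseyAlg I ↔ ∀ a : ℕ → A, RamseyOA (inducedOA I a)) ∧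
    ((∀ a : ℕ → A, RamseyOA (inducedOA I a)) ↔
      ∀ a : ℕ → A, WeaklyRamseyOA (inducedOA I a)) := by
  have ramsey_iff_weakly :
      (∀ a, RamseyOA (inducedOA I a)) ↔ ∀ a, WeaklyRamseyOA (inducedOA I a) :=
    ⟨fun h a => (h a).weaklyRamseyOA, ramseyOA_inducedOA_of_forall_weaklyRamseyOA I⟩
  exact ⟨(ramseyAlg_iff_forall_weaklyRamseyOA I).trans ramsey_iff_weakly.symm, ramsey_iff_weakly⟩

/-- TFAE: (1) `(A, I)` is a Ramsey algebra; (2) every induced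
orderly algebra `𝔄_a` is Ramsey; (3) every induced orderly algebra `𝔄_a` is
weakly Ramsey. -/
theorem ramsey_algebra_tfae {F : ℕ → Type u} [IsEmpty (F 0)] {A : Type v}
    (I : ∀ n, F n → (Fin n → A) → A) :
    (RamseyAlg I ↔ ∀ a : ℕ → A, RamseyOA (inducedOA I a)) ∧
    ((∀ a : ℕ → A, RamseyOA (inducedOA I a)) ↔
      ∀ a : ℕ → A, WeaklyRamseyOA (inducedOA I a)) :=
  ramsey_algebra_tfae_general I
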